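/- arXiv:0802.3651 — 4 statements merged into one kernel-verified Lean document; each statement's English description precedes it below -/
import Mathlib

section
/- Let U : C → Set be a monadic right adjoint (i.e. U has a left adjoint F and the comparison functor to the Eilenberg–Moore category of the induced monad is an equivalence), and let I be a small category with object type ob(I). Let I₀ denote the discrete category on ob(I) and ι : I₀ → I the identity-on-objects inclusion. Then the functor U_I : C^I → Set^{I₀}, sending a diagram A : I → C to the family (i ↦ U(A(i))), is a monadic right adjoint (its left adjoint F_I is the left Kan extension along ι followed by pointwise application of F). -/
/-!
The left adjoint of `U_I` is left Kan extension along `ι` followed by `F`. Since isomorphisms of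
diagrams are detected objectwise and the monadic functor `U` is conservative, `U_I` reflects
isomorphisms. A `U_I`-split pair of natural transformations is objectwise a `U`-split pair, and a
monadic functor creates coequalizers of split pairs; so the pair has an objectwise coequalizer in
`C^I`, which `U_I` preserves. Beck's monadicity theorem concludes.
-/

open CategoryTheory Limits

namespace CategoryTheory

universe w v v₁ v₂ v₃ u u₁ u₂ u₃

variable {C : Type u₁} [Category.{v₁} C] {D : Type u₂} [Category.{v₂} D]

lemma Functor.IsSplitPair.map {E : Type u₃} [Category.{v₃} E] {G : D ⥤ C} {A B : D}
    {f g : A ⟶ B} (h : G.IsSplitPair f g) (H : C ⥤ E) : (G ⋙ H).IsSplitPair f g :=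
  @map_is_split_pair _ _ _ _ H _ _ _ _ h

lemma hasColimit_parallelPair_comp_of_isSplitPair (G : D ⥤ C) {A B : D} (f g : A ⟶ B)
    [G.IsSplitPair f g] : HasColimit (parallelPair f g ⋙ G) :=
  hasColimit_of_iso (F := parallelPair (G.map f) (G.map g)) (diagramIsoParallelPair _)

/- Mathlib has Beck's theorem, and the creation of split coequalizers by monadic functors, only for
categories with a common hom universe. `I ⥤ C` and `Discrete I ⥤ Type w` need not have one, so we
lift the homs of the base category with `ULiftHom`, which does not affect monadicity. -/
section ULiftHom

variable {G : D ⥤ C} {L : ULiftHom.{w} C ⥤ D}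

def Adjunction.ofCompULiftHomUp (adj : L ⊣ G ⋙ ULiftHom.up) : ULiftHom.up ⋙ L ⊣ G where
  unit :=
    { app X := (adj.unit.app (ULiftHom.objUp X)).down
      naturality _ _ f := congrArg ULift.down (adj.unit.naturality (ULiftHom.up.map f)) }
  counit := adj.counit
  left_triangle_components X := adj.left_triangle_components (ULiftHom.objUp X)
  right_triangle_components Y := congrArg ULift.down (adj.right_triangle_components Y)

namespace Monad

def algebraULiftHomUp (adj : L ⊣ G ⋙ ULiftHom.up) :
    adj.ofCompULiftHomUp.toMonad.Algebra ⥤ adj.toMonad.Algebra where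
  obj A :=
    { A := ULiftHom.objUp A.A
      a := ⟨A.a⟩
      unit := congrArg ULift.up A.unit
      assoc := congrArg ULift.up A.assoc }
  map f := { f := ⟨f.f⟩, h := congrArg ULift.up f.h }

instance (adj : L ⊣ G ⋙ ULiftHom.up) : (algebraULiftHomUp adj).IsEquivalence where
  faithful := ⟨fun h => Algebra.Hom.ext (congrArg (fun f => f.f.down) h)⟩
  full := ⟨fun f => ⟨{ f := f.f.down, h := congrArg ULift.down f.h }, rfl⟩⟩
  essSurj := ⟨fun A => ⟨
    { A := A.A.objDown
      a := A.a.down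
      unit := congrArg ULift.down A.unit
      assoc := congrArg ULift.down A.assoc }, ⟨Iso.refl _⟩⟩⟩

instance (adj : L ⊣ G ⋙ ULiftHom.up) [(comparison adj).IsEquivalence] :
    (comparison adj.ofCompULiftHomUp).IsEquivalence := by
  have : (comparison adj.ofCompULiftHomUp ⋙ algebraULiftHomUp adj).IsEquivalence :=
    inferInstanceAs (comparison adj).IsEquivalence
  exact Functor.isEquivalence_of_comp_right _ (algebraULiftHomUp adj)

abbrev monadicOfCompULiftHomUp [MonadicRightAdjoint (G ⋙ (ULiftHom.up : C ⥤ ULiftHom.{w} C))] :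
    MonadicRightAdjoint G where
  L := ULiftHom.up ⋙ monadicLeftAdjoint _
  adj := (monadicAdjunction _).ofCompULiftHomUp
  eqv := inferInstance

end Monad

end ULiftHom

namespace Monad

abbrev monadicOfHasPreservesGSplitCoequalizersOfReflectsIsomorphisms'
    {D : Type u₂} [Category.{max v₁ v₂} D] {G : D ⥤ C} {F : C ⥤ D} (adj : F ⊣ G)
    [G.ReflectsIsomorphisms]
    (hasCoequalizer : ∀ ⦃A B : D⦄ (f g : A ⟶ B), G.IsSplitPair f g → HasCoequalizer f g)
    (preserves : ∀ ⦃A B : D⦄ (f g : A ⟶ B), G.IsSplitPair f g →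
      PreservesColimit (parallelPair f g) G) :
    MonadicRightAdjoint G := by
  let up : C ⥤ ULiftHom.{v₂} C := ULiftHom.up
  have : up.IsEquivalence := ULiftHom.equiv.isEquivalence_functor
  have : HasCoequalizerOfIsSplitPair (G ⋙ up) :=
    ⟨fun f g h => hasCoequalizer f g (h.map ULiftHom.down)⟩
  have : PreservesColimitOfIsSplitPair (G ⋙ up) :=
    ⟨fun f g h => have := preserves f g (h.map ULiftHom.down); inferInstance⟩
  let adj' : ULiftHom.down ⋙ F ⊣ G ⋙ up := ULiftHom.equiv.symm.toAdjunction.comp adj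
  have := monadicOfHasPreservesGSplitCoequalizersOfReflectsIsomorphisms adj'
  exact monadicOfCompULiftHomUp

variable (G : D ⥤ C) [MonadicRightAdjoint G]

instance : G.ReflectsIsomorphisms :=
  reflectsIsomorphisms_of_iso (comparisonForget (monadicAdjunction G))

noncomputable abbrev createsGSplitCoequalizersOfMonadic' ⦃A B : D⦄ (f g : A ⟶ B)
    [G.IsSplitPair f g] : CreatesColimit (parallelPair f g) G := by
  apply +allowSynthFailures monadicCreatesColimitOfPreservesColimit
  -- both diagrams are split coequalizer diagrams, which every functor preserves
  all_goals
    exact @preservesColimit_of_iso_diagram _ _ _ _ _ _ _ _ _ (diagramIsoParallelPair _).symm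
      (by dsimp; infer_instance)

lemma hasCoequalizer_of_isSplitPair {A B : D} (f g : A ⟶ B) [G.IsSplitPair f g] :
    HasCoequalizer f g :=
  have := createsGSplitCoequalizersOfMonadic' G f g
  have := hasColimit_parallelPair_comp_of_isSplitPair G f g
  hasColimit_of_created _ G

lemma preservesColimit_of_isSplitPair {A B : D} (f g : A ⟶ B) [G.IsSplitPair f g] :
    PreservesColimit (parallelPair f g) G :=
  have := createsGSplitCoequalizersOfMonadic' G f g
  have := hasColimit_parallelPair_comp_of_isSplitPair G f g
  preservesColimit_of_createsColimit_and_hasColimit _ _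

end Monad

namespace Functor

variable {E : Type u₃} [Category.{v₃} E] {I : Type u} [Category.{v} I] (U : C ⥤ E)

abbrev objectwise (I : Type u) [Category.{v} I] : (I ⥤ C) ⥤ (Discrete I ⥤ E) :=
  (whiskeringLeft (Discrete I) I C).obj (Discrete.functor id) ⋙
    (whiskeringRight (Discrete I) C E).obj U

instance [U.ReflectsIsomorphisms] : (U.objectwise I).ReflectsIsomorphisms where
  reflects η _ := by
    rw [NatTrans.isIso_iff_isIso_app]
    intro i
    have : IsIso (U.map (η.app i)) := inferInstanceAs (IsIso (((U.objectwise I).map η).app ⟨i⟩))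
    exact isIso_of_reflects_iso (η.app i) U

variable (I) in
noncomputable def objectwiseAdjunction {F : E ⥤ C} (adj : F ⊣ U)
    [∀ X : Discrete I ⥤ E, (Discrete.functor (id : I → I)).HasLeftKanExtension X] :
    (Discrete.functor id).lan ⋙ (whiskeringRight I E C).obj F ⊣ U.objectwise I :=
  ((Discrete.functor id).lanAdjunction E).comp (adj.whiskerRight I)

variable {U} {A B : I ⥤ C} {f g : A ⟶ B}

lemma IsSplitPair.app (h : (U.objectwise I).IsSplitPair f g) (i : I) :
    U.IsSplitPair (f.app i) (g.app i) :=
  h.map ((evaluation (Discrete I) E).obj ⟨i⟩)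

variable [MonadicRightAdjoint U]

lemma hasColimit_flip_obj_of_isSplitPair_objectwise (h : (U.objectwise I).IsSplitPair f g)
    (i : I) : HasColimit ((parallelPair f g).flip.obj i) :=
  have := h.app i
  have := Monad.hasCoequalizer_of_isSplitPair U (f.app i) (g.app i)
  hasColimit_of_iso (F := parallelPair (f.app i) (g.app i)) (diagramIsoParallelPair _)

lemma hasCoequalizer_of_isSplitPair_objectwise (h : (U.objectwise I).IsSplitPair f g) :
    HasCoequalizer f g :=
  have := hasColimit_flip_obj_of_isSplitPair_objectwise h
  inferInstance

lemma preservesColimit_objectwise_of_isSplitPair (h : (U.objectwise I).IsSplitPair f g) :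
    PreservesColimit (parallelPair f g) (U.objectwise I) := by
  have := hasColimit_flip_obj_of_isSplitPair_objectwise h
  refine preservesColimit_of_evaluation _ _ fun ⟨i⟩ => ?_
  have := h.app i
  have := Monad.preservesColimit_of_isSplitPair U (f.app i) (g.app i)
  have : PreservesColimit (parallelPair f g ⋙ (evaluation I C).obj i) U :=
    @preservesColimit_of_iso_diagram _ _ _ _ _ _ _ _ U (diagramIsoParallelPair _).symm this
  exact inferInstanceAs (PreservesColimit _ ((evaluation I C).obj i ⋙ U))

end Functor

end CategoryTheory

/-- if `U : C ⥤ Set` is a monadic right adjoint and `I` is a small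
category, then the functor `U_I : C^I ⥤ Set^{I₀}` (where `I₀` is the discrete
category on the objects of `I`), sending a diagram `A` to the family
`i ↦ U (A i)`, i.e. the composite of restriction along the inclusion
`ι : I₀ ⥤ I` with postcomposition by `U`, is a monadic right adjoint. -/
theorem diagram_functor_monadic {C : Type u₁} [Category.{v₁} C] (U : C ⥤ Type w)
    [MonadicRightAdjoint U] (I : Type w) [SmallCategory I] :
    Nonempty (MonadicRightAdjoint
      (((Functor.whiskeringLeft (Discrete I) I C).obj (Discrete.functor (id : I → I))) ⋙
        ((Functor.whiskeringRight (Discrete I) C (Type w)).obj U))) :=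
  ⟨Monad.monadicOfHasPreservesGSplitCoequalizersOfReflectsIsomorphisms'
    (U.objectwiseAdjunction I (monadicAdjunction U))
    (fun _ _ _ _ h => Functor.hasCoequalizer_of_isSplitPair_objectwise h)
    (fun _ _ _ _ h => Functor.preservesColimit_objectwise_of_isSplitPair h)⟩
end

section
/- Let U : C → Set be a right adjoint with left adjoint F, let 𝔾 = F U be the induced comonad on C, let I be a small category, let U_I : C^I → Set^{I₀} be the functor A ↦ (i ↦ U(A(i))) (where I₀ is the discrete category on the objects of I), let F_I be its left adjoint (left Kan extension along the inclusion I₀ → I followed by pointwise application of F), and let 𝔾_I = F_I U_I be the induced comonad on C^I. If a diagram A : I → C is 𝔾_I-projective, then for every object i of I the object A(i) is 𝔾-projective in C. -/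
open CategoryTheory

variable {C : Type u₁} [Category.{v₁} C]

/-- A morphism `f : X ⟶ Y` is a `𝔾`-epimorphism if for every object `Z` the
postcomposition map `Hom(G Z, X) → Hom(G Z, Y)` is surjective. -/
def IsGEpi (G : Comonad C) {X Y : C} (f : X ⟶ Y) : Prop :=
  ∀ Z : C, Function.Surjective (fun g : (G : C ⥤ C).obj Z ⟶ X => g ≫ f)

/-- An object `P` is `𝔾`-projective if for every `𝔾`-epimorphism `f : X ⟶ Y` the
postcomposition map `Hom(P, X) → Hom(P, Y)` is surjective. -/
def IsGProjective (G : Comonad C) (P : C) : Prop :=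
  ∀ ⦃X Y : C⦄ (f : X ⟶ Y), IsGEpi G f → Function.Surjective (fun g : P ⟶ X => g ≫ f)

/-!
The counit `ε_A : A ⋙ U ⋙ F ⟶ A`, taken pointwise, becomes split epi after applying `U_I` (it is
split by the unit, by a triangle identity), hence it is a `𝔾_I`-epimorphism. Since `A` is
`𝔾_I`-projective, `ε_A` has a section, so `A` is a retract of `A ⋙ U ⋙ F`. Evaluating at `i`
exhibits `A(i)` as a retract of `𝔾 (A(i))`, and objects `𝔾 Z` are `𝔾`-projective.
-/

theorem isGProjective_obj (G : Comonad C) (Z : C) : IsGProjective G (G.obj Z) :=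
  fun _ _ _ hf => hf Z

theorem IsGProjective.of_retract {G : Comonad C} {P Q : C} (r : Retract P Q)
    (hQ : IsGProjective G Q) : IsGProjective G P := by
  intro X Y f hf y
  obtain ⟨x, hx⟩ := hQ f hf (r.r ≫ y)
  exact ⟨r.i ≫ x, by simp only [Category.assoc, hx, r.retract_assoc]⟩

noncomputable def IsGProjective.retractOfIsGEpi {G : Comonad C} {P X : C}
    (hP : IsGProjective G P) (f : X ⟶ P) (hf : IsGEpi G f) : Retract P X where
  i := (hP f hf (𝟙 P)).choose
  r := f
  retract := (hP f hf (𝟙 P)).choose_spec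

theorem isGEpi_of_isSplitEpi_map {D : Type u₂} [Category.{v₂} D] {L : D ⥤ C} {R : C ⥤ D}
    (adj : L ⊣ R) {X Y : C} (f : X ⟶ Y) [IsSplitEpi (R.map f)] : IsGEpi adj.toComonad f := by
  intro Z
  change Function.Surjective fun g : L.obj (R.obj Z) ⟶ X => g ≫ f
  intro y
  refine ⟨(adj.homEquiv _ _).symm (adj.homEquiv _ _ y ≫ section_ (R.map f)), ?_⟩
  apply (adj.homEquiv _ _).injective
  dsimp only
  rw [Adjunction.homEquiv_naturality_right, Equiv.apply_symm_apply, Category.assoc,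
    IsSplitEpi.id, Category.comp_id]

instance isSplitEpi_whiskering_map_whiskerLeft_counit {D : Type u₂} [Category.{v₂} D]
    {J I : Type*} [Category J] [Category I] (K : J ⥤ I) {F : D ⥤ C} {U : C ⥤ D} (adj : F ⊣ U)
    (A : I ⥤ C) :
    IsSplitEpi ((((Functor.whiskeringLeft J I C).obj K) ⋙
      (Functor.whiskeringRight J C D).obj U).map (A.whiskerLeft adj.counit : A ⋙ U ⋙ F ⟶ A)) :=
  IsSplitEpi.mk' ⟨(K ⋙ A ⋙ U).whiskerLeft adj.unit, by ext; simp⟩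

/-- let `F ⊣ U` with `U : C ⥤ Set`, `𝔾 = F U` the induced comonad,
`I` a small category, `U_I : C^I ⥤ Set^{I₀}` the functor `A ↦ (i ↦ U (A i))`,
`F_I` its left adjoint, and `𝔾_I = F_I U_I` the induced comonad on `C^I`.
If `A : I ⥤ C` is `𝔾_I`-projective then each `A(i)` is `𝔾`-projective. -/
theorem objectwise_G_projective_of_diagram_projective
    (F : Type w ⥤ C) (U : C ⥤ Type w) (adj : F ⊣ U)
    (I : Type w) [SmallCategory I]
    (FI : (Discrete I ⥤ Type w) ⥤ (I ⥤ C))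
    (adjI : FI ⊣ (((Functor.whiskeringLeft (Discrete I) I C).obj (Discrete.functor (id : I → I))) ⋙
      ((Functor.whiskeringRight (Discrete I) C (Type w)).obj U)))
    (A : I ⥤ C) (hA : IsGProjective adjI.toComonad A) (i : I) :
    IsGProjective adj.toComonad (A.obj i) := by
  let ε : A ⋙ U ⋙ F ⟶ A := A.whiskerLeft adj.counit
  have hε : IsGEpi adjI.toComonad ε := isGEpi_of_isSplitEpi_map adjI ε
  exact (isGProjective_obj adj.toComonad (A.obj i)).of_retract
    ((hA.retractOfIsGEpi ε hε).map ((evaluation I C).obj i))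
end

section
/- Let (R, ψ) be a Ψ-ring and M a Ψ-module over R with operations Ψⁿ : M → M. Then the trivial square-zero extension R ⋊ M (with multiplication (r,m)(r',m') = (rr', r·m' + r'·m)), equipped with the maps ψ̃ⁿ(r,m) = (ψⁿ(r), Ψⁿ(m)) for n ≥ 1, is a Ψ-ring: each ψ̃ⁿ is a ring homomorphism R ⋊ M → R ⋊ M, ψ̃¹ = id, and ψ̃ⁿ ∘ ψ̃ᵐ = ψ̃ⁿᵐ for all n, m ≥ 1. -/
/-! Since `Ψⁿ` is `ψⁿ`-semilinear, the componentwise map `(r, m) ↦ (ψⁿ r, Ψⁿ m)` is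
multiplicative on `R ⋊ M`, and the Ψ-ring identities hold in each component separately. -/

namespace TrivSqZeroExt

variable {R S T M N P : Type*} [CommSemiring R] [CommSemiring S] [CommSemiring T]
  [AddCommMonoid M] [Module R M] [Module Rᵐᵒᵖ M] [IsCentralScalar R M]
  [AddCommMonoid N] [Module S N] [Module Sᵐᵒᵖ N] [IsCentralScalar S N]
  [AddCommMonoid P] [Module T P] [Module Tᵐᵒᵖ P] [IsCentralScalar T P]

def mapSemilinear (f : R →+* S) (g : M →+ N) (hg : ∀ (r : R) (m : M), g (r • m) = f r • g m) :
    TrivSqZeroExt R M →+* TrivSqZeroExt S N where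
  toFun x := (f x.fst, g x.snd)
  map_one' := ext (map_one f) (map_zero g)
  map_mul' x y := ext (map_mul f _ _) <| by
    change g (x.fst • y.snd + MulOpposite.op y.fst • x.snd) =
      f x.fst • g y.snd + MulOpposite.op (f y.fst) • g x.snd
    simp only [op_smul_eq_smul, map_add, hg]
  map_zero' := ext (map_zero f) (map_zero g)
  map_add' x y := ext (map_add f _ _) (map_add g _ _)

variable {f f' : R →+* S} {g g' : M →+ N} {hg : ∀ (r : R) (m : M), g (r • m) = f r • g m}

@[simp]
theorem fst_mapSemilinear (x : TrivSqZeroExt R M) : (mapSemilinear f g hg x).fst = f x.fst := rfl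

@[simp]
theorem snd_mapSemilinear (x : TrivSqZeroExt R M) : (mapSemilinear f g hg x).snd = g x.snd := rfl

theorem mapSemilinear_congr {hg' : ∀ (r : R) (m : M), g' (r • m) = f' r • g' m}
    (hf : f = f') (hgg : g = g') : mapSemilinear f g hg = mapSemilinear f' g' hg' := by
  subst hf hgg
  rfl

theorem mapSemilinear_id :
    mapSemilinear (RingHom.id R) (AddMonoidHom.id M) (fun _ _ => rfl) = RingHom.id _ :=
  rfl

theorem mapSemilinear_comp (f₂ : S →+* T) (g₂ : N →+ P)
    (hg₂ : ∀ (s : S) (n : N), g₂ (s • n) = f₂ s • g₂ n) :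
    (mapSemilinear f₂ g₂ hg₂).comp (mapSemilinear f g hg) =
      mapSemilinear (f₂.comp f) (g₂.comp g) (fun r m => by simp [hg, hg₂]) :=
  rfl

end TrivSqZeroExt

open TrivSqZeroExt in
/-- if `(R, ψ)` is a Ψ-ring and `M` a Ψ-module over `R` with operations
`Ψⁿ`, then the trivial square-zero extension `R ⋊ M`, with the maps
`ψ̃ⁿ(r, m) = (ψⁿ r, Ψⁿ m)`, is a Ψ-ring: each `ψ̃ⁿ` is a ring homomorphism,
`ψ̃¹ = id`, and `ψ̃ⁿ ∘ ψ̃ᵐ = ψ̃ⁿᵐ`. -/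
theorem semidirect_product_is_psi_ring (R : Type u) (M : Type v) [CommRing R]
    [AddCommGroup M] [Module R M] [Module Rᵐᵒᵖ M] [IsCentralScalar R M]
    -- the Ψ-ring structure on R
    (ψ : ℕ+ → R →+* R) (hψ1 : ψ 1 = RingHom.id R)
    (hψmul : ∀ n m : ℕ+, (ψ n).comp (ψ m) = ψ (n * m))
    -- the Ψ-module structure on M
    (Ψ : ℕ+ → M →+ M) (hΨ1 : Ψ 1 = AddMonoidHom.id M)
    (hΨsmul : ∀ (n : ℕ+) (r : R) (m : M), Ψ n (r • m) = ψ n r • Ψ n m)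
    (hΨmul : ∀ n l : ℕ+, (Ψ n).comp (Ψ l) = Ψ (n * l)) :
    ∃ ψt : ℕ+ → TrivSqZeroExt R M →+* TrivSqZeroExt R M,
      (∀ (n : ℕ+) (x : TrivSqZeroExt R M),
        (ψt n x).fst = ψ n x.fst ∧ (ψt n x).snd = Ψ n x.snd) ∧
      ψt 1 = RingHom.id (TrivSqZeroExt R M) ∧
      ∀ n m : ℕ+, (ψt n).comp (ψt m) = ψt (n * m) := by
  refine ⟨fun n => mapSemilinear (ψ n) (Ψ n) (hΨsmul n),
    fun n x => ⟨fst_mapSemilinear x, snd_mapSemilinear x⟩, ?_, fun n m => ?_⟩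
  · rw [← mapSemilinear_id]
    exact mapSemilinear_congr hψ1 hΨ1
  · rw [mapSemilinear_comp]
    exact mapSemilinear_congr (hψmul n m) (hΨmul n m)
end

section
/- Let U : C → Set be a right adjoint with left adjoint F, let I be a small category, let U_I : C^I → Set^{I₀} be the functor A ↦ (i ↦ U(A(i))) (where I₀ is the discrete category on the objects of I), and let F_I be its left adjoint, given by left Kan extension along the inclusion ι : I₀ → I followed by pointwise application of F. Then the induced comonad 𝔾_I = F_I U_I on C^I is computed objectwise by coproducts of values of the comonad 𝔾 = F U on C: for every diagram A : I → C and every object i of I, there is an isomorphism (𝔾_I A)(i) ≅ ∐_{x ∈ ob(I), u : x → i} 𝔾(A(x)) = ∐_{x, u : x → i} F(U(A(x))), the coproduct in C over all objects x and all morphisms u : x → i. -/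
/-!
Both `FI` and `Lan_ι ⋙ (F ∘ -)` are left adjoint to `U_I`, so they agree up to isomorphism.
Because `ι : Discrete I ⥤ I` has a discrete source, the comma category `ι ↓ i` is discrete on
the pairs `(x, u : x ⟶ i)`, so the pointwise formula for `Lan_ι` at `i` is a coproduct of sets,
and the left adjoint `F` carries it to the coproduct of the `F (U (A x))`.
-/

open CategoryTheory CategoryTheory.Limits

namespace CategoryTheory.Discrete

variable {J I : Type*} [Category I] (f : J → I) (i : I)

lemma costructuredArrow_eq_of_hom {g g' : CostructuredArrow (Discrete.functor f) i}
    (φ : g ⟶ g') : g = g' := by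
  obtain ⟨⟨j⟩, ⟨⟨⟩⟩, u⟩ := g
  obtain ⟨⟨j'⟩, ⟨⟨⟩⟩, u'⟩ := g'
  obtain ⟨⟨⟨⟨rfl⟩⟩⟩, _, w⟩ := φ
  obtain rfl : u = u' := by simpa using w.symm
  rfl

instance (g g' : CostructuredArrow (Discrete.functor f) i) : Subsingleton (g ⟶ g') :=
  ⟨fun _ _ => CostructuredArrow.hom_ext _ _ (Subsingleton.elim _ _)⟩

def sigmaEquivalenceCostructuredArrow :
    Discrete (Σ j, f j ⟶ i) ≌ CostructuredArrow (Discrete.functor f) i where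
  functor := Discrete.functor fun p => CostructuredArrow.mk (Y := Discrete.mk p.1) p.2
  inverse :=
    { obj := fun g => ⟨⟨g.left.as, g.hom⟩⟩
      map := fun φ => eqToHom (by rw [costructuredArrow_eq_of_hom f i φ]) }
  unitIso := Discrete.natIso fun _ => Iso.refl _
  counitIso := NatIso.ofComponents (fun g => eqToIso (by obtain ⟨⟨_⟩, ⟨⟨⟩⟩, _⟩ := g; rfl))
    (fun _ => Subsingleton.elim _ _)

variable {D : Type*} [Category D] (X : Discrete J ⥤ D)

def sigmaEquivalenceCostructuredArrowCompProjIso :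
    (sigmaEquivalenceCostructuredArrow f i).functor ⋙
      CostructuredArrow.proj (Discrete.functor f) i ⋙ X ≅
    Discrete.functor fun p : Σ j, f j ⟶ i => X.obj ⟨p.1⟩ :=
  Discrete.natIso fun _ => Iso.refl _

instance hasPointwiseLeftKanExtensionAt [HasCoproduct fun p : Σ j, f j ⟶ i => X.obj ⟨p.1⟩] :
    (Discrete.functor f).HasPointwiseLeftKanExtensionAt X i :=
  have := hasColimit_of_iso (sigmaEquivalenceCostructuredArrowCompProjIso f i X)
  hasColimit_of_equivalence_comp (sigmaEquivalenceCostructuredArrow f i)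

noncomputable def leftKanExtensionObjIsoSigma
    [∀ y, HasCoproduct fun p : Σ j, f j ⟶ y => X.obj ⟨p.1⟩] :
    ((Discrete.functor f).leftKanExtension X).obj i ≅ ∐ fun p : Σ j, f j ⟶ i => X.obj ⟨p.1⟩ :=
  (Discrete.functor f).leftKanExtensionObjIsoColimit X i ≪≫
    (HasColimit.isoOfEquivalence (sigmaEquivalenceCostructuredArrow f i)
      (sigmaEquivalenceCostructuredArrowCompProjIso f i X)).symm

end CategoryTheory.Discrete

/-- let `F ⊣ U` with `U : C ⥤ Set`, `I` a small category,
`U_I : C^I ⥤ Set^{I₀}` the functor `A ↦ (i ↦ U (A i))` and `F_I` its left adjoint.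
Then the comonad `𝔾_I = F_I U_I` on `C^I` is computed objectwise by coproducts of
values of the comonad `𝔾 = F U`: for every `A : I ⥤ C` and every `i`, the
coproduct `∐_{x, u : x ⟶ i} F (U (A x))` exists in `C` and
`(𝔾_I A)(i) ≅ ∐_{x, u : x ⟶ i} F (U (A x))`. -/
theorem diagram_comonad_objectwise {C : Type u₁} [Category.{v₁} C]
    (F : Type w ⥤ C) (U : C ⥤ Type w) (adj : F ⊣ U)
    (I : Type w) [SmallCategory I]
    (FI : (Discrete I ⥤ Type w) ⥤ (I ⥤ C))
    (adjI : FI ⊣ (((Functor.whiskeringLeft (Discrete I) I C).obj (Discrete.functor (id : I → I))) ⋙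
      ((Functor.whiskeringRight (Discrete I) C (Type w)).obj U)))
    (A : I ⥤ C) (i : I) :
    ∃ h : HasCoproduct (fun p : Σ x : I, x ⟶ i => F.obj (U.obj (A.obj p.1))),
      Nonempty ((adjI.toComonad.obj A).obj i ≅
        @sigmaObj _ _ _ (fun p : Σ x : I, x ⟶ i => F.obj (U.obj (A.obj p.1))) h) := by
  have := adj.leftAdjoint_preservesColimits
  let ι := Discrete.functor (id : I → I)
  let lanAdj := (ι.lanAdjunction (Type w)).comp (adj.whiskerRight I)
  let g := fun p : Σ x : I, x ⟶ i => U.obj (A.obj p.1)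
  have h : HasCoproduct fun p => F.obj (g p) :=
    hasColimit_of_iso (Discrete.compNatIsoDiscrete g F).symm
  exact ⟨h, ⟨((adjI.leftAdjointUniq lanAdj).app _).app i ≪≫
    F.mapIso (Discrete.leftKanExtensionObjIsoSigma id i _) ≪≫ PreservesCoproduct.iso F g⟩⟩
end
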